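/- Let ρ : M_J(ℂ) → M_n(ℂ) be a unital 2-positive linear map, τ the normalized trace on M_n(ℂ), and x ∈ M_J(ℂ) a contraction with polar decomposition x = v₀|x| where v₀ is unitary. If τ(ρ(x*x)) > 1 − 2ε for some ε > 0, then ‖ρ(v₀) − ρ(x)‖₂² < 2ε, where ‖a‖₂² = τ(a*a). -/

import Mathlib

/-!
Put `y = v₀ (1 - |x|)`, so that `ρ y = ρ v₀ - ρ x` and `y* y = (1 - |x|)²` since `v₀` is an
isometry. The Kadison–Schwarz inequality for the unital 2-positive map `ρ`, positivity of `ρ`,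
and `(1 - |x|)² ≤ 1 - |x|²` (functional calculus, as `0 ≤ |x| ≤ 1`) give
`(ρ v₀ - ρ x)* (ρ v₀ - ρ x) ≤ ρ ((1 - |x|)²) ≤ 1 - ρ (x* x)`,
and taking normalized traces, `‖ρ v₀ - ρ x‖₂² ≤ 1 - τ (ρ (x* x)) < 2ε`.
-/

open ComplexOrder

/-- A linear map between matrix algebras is 2-positive if its amplification to
2×2 block matrices preserves positive semidefiniteness. -/
def TwoPositive {J n : ℕ}
    (ρ : Matrix (Fin J) (Fin J) ℂ →ₗ[ℂ] Matrix (Fin n) (Fin n) ℂ) : Prop :=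
  ∀ a : Matrix (Fin 2 × Fin J) (Fin 2 × Fin J) ℂ, a.PosSemidef →
    (Matrix.of fun p q : Fin 2 × Fin n =>
      ρ (Matrix.of fun i j => a (p.1, i) (q.1, j)) p.2 q.2).PosSemidef

open Matrix
open scoped MatrixOrder

section FunctionalCalculus

variable {A : Type*} [Ring A] [StarRing A] [PartialOrder A] [StarOrderedRing A]
  [TopologicalSpace A] [Algebra ℝ A] [ContinuousFunctionalCalculus ℝ A IsSelfAdjoint]
  [NonnegSpectrumClass ℝ A]

theorem one_sub_mul_one_sub_le_one_sub_mul_self {a : A} (ha₀ : 0 ≤ a) (ha₁ : a * a ≤ 1) :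
    (1 - a) * (1 - a) ≤ 1 - a * a := by
  have ha : IsSelfAdjoint a := ha₀.isSelfAdjoint
  have hsq : a * a = cfc (fun t : ℝ => t * t) a := by rw [cfc_mul .., cfc_id' ..]
  have hσ : ∀ t ∈ spectrum ℝ a, 0 ≤ t ∧ t * t ≤ 1 := fun t ht =>
    ⟨spectrum_nonneg_of_nonneg ha₀ ht, (cfc_le_one_iff (fun t : ℝ => t * t) a).mp (hsq ▸ ha₁) t ht⟩
  have hl : (1 - a) * (1 - a) = cfc (fun t : ℝ => (1 - t) * (1 - t)) a := by
    rw [cfc_mul .., cfc_sub .., cfc_const_one .., cfc_id' ..]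
  have hr : 1 - a * a = cfc (fun t : ℝ => 1 - t * t) a := by
    rw [cfc_sub .., cfc_const_one .., hsq]
  rw [hl, hr]
  exact cfc_mono fun t ht => by nlinarith [hσ t ht]

end FunctionalCalculus

theorem Matrix.re_trace_le_re_trace {𝕜 m : Type*} [RCLike 𝕜] [Fintype m] {a b : Matrix m m 𝕜}
    (h : a ≤ b) : RCLike.re a.trace ≤ RCLike.re b.trace := by
  rw [← sub_nonneg, ← map_sub, ← trace_sub]
  exact (RCLike.nonneg_iff.mp (le_iff.mp h).trace_nonneg).1

theorem Matrix.re_trace_div_le_one_sub_re_trace_div {n : ℕ} (hn : 0 < n)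
    {a b : Matrix (Fin n) (Fin n) ℂ} (h : a ≤ 1 - b) :
    (a.trace / n).re ≤ 1 - (b.trace / n).re := by
  have htr : a.trace.re ≤ (1 - b).trace.re := re_trace_le_re_trace h
  rw [trace_sub, trace_one, Complex.sub_re, Fintype.card_fin, Complex.natCast_re] at htr
  have hn' : (0 : ℝ) < n := Nat.cast_pos.mpr hn
  rw [Complex.div_natCast_re, Complex.div_natCast_re, le_sub_iff_add_le, ← add_div,
    div_le_one hn']
  linarith

-- `(0, i) ↦ Sum.inl i` and `(1, i) ↦ Sum.inr i`
def finTwoProdEquivSum (α : Type*) : Fin 2 × α ≃ α ⊕ α :=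
  (finTwoEquiv.prodCongr (Equiv.refl α)).trans (Equiv.boolProdEquivSum α)

namespace TwoPositive

variable {J n : ℕ} {ρ : Matrix (Fin J) (Fin J) ℂ →ₗ[ℂ] Matrix (Fin n) (Fin n) ℂ}

theorem map_fromBlocks (hρ : TwoPositive ρ) {a b c d : Matrix (Fin J) (Fin J) ℂ}
    (h : (fromBlocks a b c d).PosSemidef) :
    (fromBlocks (ρ a) (ρ b) (ρ c) (ρ d)).PosSemidef := by
  rw [← posSemidef_submatrix_equiv (finTwoProdEquivSum (Fin n))]
  convert hρ _ (h.submatrix (finTwoProdEquivSum (Fin J))) using 1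
  ext ⟨q, i⟩ ⟨r, j⟩
  fin_cases q <;> fin_cases r <;> rfl

theorem map_fromBlocks_conjTranspose_mul (hρ : TwoPositive ρ) (a b : Matrix (Fin J) (Fin J) ℂ) :
    (fromBlocks (ρ (aᴴ * a)) (ρ (aᴴ * b)) (ρ (bᴴ * a)) (ρ (bᴴ * b))).PosSemidef := by
  apply hρ.map_fromBlocks
  have h := posSemidef_conjTranspose_mul_self (fromBlocks a b (0 : Matrix (Fin J) (Fin J) ℂ) 0)
  simpa only [fromBlocks_conjTranspose, conjTranspose_zero, fromBlocks_multiply, mul_zero,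
    add_zero] using h

theorem map_posSemidef (hρ : TwoPositive ρ) {c : Matrix (Fin J) (Fin J) ℂ} (hc : c.PosSemidef) :
    (ρ c).PosSemidef := by
  obtain ⟨s, rfl⟩ := CStarAlgebra.nonneg_iff_eq_star_mul_self.mp hc.nonneg
  exact (hρ.map_fromBlocks_conjTranspose_mul 0 s).submatrix Sum.inr

theorem monotone (hρ : TwoPositive ρ) : Monotone ρ := fun a b h => by
  rw [le_iff, ← map_sub]
  exact hρ.map_posSemidef h

-- The Schur complement of the positive block matrix `[[1, ρ y], [(ρ y)*, ρ (y* y)]]`.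
theorem kadison_schwarz (hρ : TwoPositive ρ) (hunital : ρ 1 = 1) (y : Matrix (Fin J) (Fin J) ℂ) :
    star (ρ y) * ρ y ≤ ρ (star y * y) := by
  have h := hρ.map_fromBlocks_conjTranspose_mul 1 y
  simp only [conjTranspose_one, one_mul, mul_one, hunital] at h
  obtain ⟨-, hadj, -, -⟩ := isHermitian_fromBlocks_iff.mp h.isHermitian
  rw [← hadj] at h
  have : Invertible (1 : Matrix (Fin n) (Fin n) ℂ) := invertibleOne
  have hschur := (PosDef.fromBlocks₁₁ (ρ y) (ρ (yᴴ * y)) PosDef.one).mp h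
  rw [inv_one, mul_one] at hschur
  exact hschur

end TwoPositive

theorem stmt8_general {J n : ℕ} (hn : 0 < n)
    (ρ : Matrix (Fin J) (Fin J) ℂ →ₗ[ℂ] Matrix (Fin n) (Fin n) ℂ)
    (hunital : ρ 1 = 1) (h2pos : TwoPositive ρ)
    (x v₀ p : Matrix (Fin J) (Fin J) ℂ)
    (hv₀ : star v₀ * v₀ = 1)
    (hp : p.PosSemidef) (hpsq : p * p = star x * x) (hpolar : x = v₀ * p)
    (hx : (1 - star x * x).PosSemidef)
    (ε : ℝ)
    (hτ : 1 - 2 * ε < ((Matrix.trace (ρ (star x * x))) / n).re) :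
    ((Matrix.trace (star (ρ v₀ - ρ x) * (ρ v₀ - ρ x))) / n).re < 2 * ε := by
  set y := v₀ * (1 - p) with hy
  have hρy : ρ y = ρ v₀ - ρ x := by rw [hy, mul_sub, mul_one, map_sub, hpolar]
  have hyy : star y * y = (1 - p) * (1 - p) := by
    rw [hy, star_mul, star_sub, star_one, hp.isHermitian.star_eq, mul_assoc,
      ← mul_assoc (star v₀), hv₀, one_mul]
  have hp_le : p * p ≤ 1 := le_iff.mpr (hpsq ▸ hx)
  have hle : star (ρ v₀ - ρ x) * (ρ v₀ - ρ x) ≤ 1 - ρ (star x * x) :=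
    calc star (ρ v₀ - ρ x) * (ρ v₀ - ρ x) = star (ρ y) * ρ y := by rw [hρy]
      _ ≤ ρ (star y * y) := h2pos.kadison_schwarz hunital y
      _ = ρ ((1 - p) * (1 - p)) := by rw [hyy]
      _ ≤ ρ (1 - p * p) :=
        h2pos.monotone (one_sub_mul_one_sub_le_one_sub_mul_self hp.nonneg hp_le)
      _ = 1 - ρ (star x * x) := by rw [map_sub, hunital, hpsq]
  linarith [re_trace_div_le_one_sub_re_trace_div hn hle]

/-- If ρ is unital 2-positive, x a contraction with polar decomposition
x = v₀|x| (v₀ unitary), and τ(ρ(x*x)) > 1 − 2ε, then ‖ρ(v₀) − ρ(x)‖₂² < 2ε. -/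
theorem stmt8 {J n : ℕ} (hn : 0 < n)
    (ρ : Matrix (Fin J) (Fin J) ℂ →ₗ[ℂ] Matrix (Fin n) (Fin n) ℂ)
    (hunital : ρ 1 = 1) (h2pos : TwoPositive ρ)
    (x v₀ p : Matrix (Fin J) (Fin J) ℂ)
    (hv₀ : star v₀ * v₀ = 1) (hv₀' : v₀ * star v₀ = 1)
    (hp : p.PosSemidef) (hpsq : p * p = star x * x) (hpolar : x = v₀ * p)
    (hx : (1 - star x * x).PosSemidef)
    (ε : ℝ) (hε : 0 < ε)
    (hτ : 1 - 2 * ε < ((Matrix.trace (ρ (star x * x))) / n).re) :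
    ((Matrix.trace (star (ρ v₀ - ρ x) * (ρ v₀ - ρ x))) / n).re < 2 * ε :=
  stmt8_general hn ρ hunital h2pos x v₀ p hv₀ hp hpsq hpolar hx ε hτ
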